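/- arXiv:1908.06076 — 2 statements merged into one kernel-verified Lean document; each statement's English description precedes it below -/
import Mathlib

section
/- Let n ≥ 1 and let V be an n × n unitary matrix all of whose entries lie in the ring ℤ[1/√2] = {x₀ + x₁√2 : x₀, x₁ ∈ ℤ[1/2]}. Then there exist finitely many generators G₁, …, G_ℓ, each taken from the set {(-1)_[a], X_[a,b], H_[a,b] : a, b distinct elements of {1,…,n}}, such that G₁ ⋯ G_ℓ V = I. -/
open Matrix Complex

noncomputable section

/-- The `m`-level operator of type `W` with indices `f 0, …, f (m-1)`:
for injective `f`, its `(f j', f k')` entry is `W j' k'` and it agrees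
with the identity matrix elsewhere. -/
def levelOp {n m : ℕ} (f : Fin m → Fin n) (W : Matrix (Fin m) (Fin m) ℂ) :
    Matrix (Fin n) (Fin n) ℂ := fun j k =>
  (∑ j' : Fin m, ∑ k' : Fin m, if f j' = j ∧ f k' = k then W j' k' else 0) +
  (if j = k ∧ ∀ j' : Fin m, f j' ≠ j then 1 else 0)

/-- The NOT gate `X`. -/
def Xmat : Matrix (Fin 2) (Fin 2) ℂ := !![0, 1; 1, 0]

/-- The Hadamard gate `H`. -/
def Hmat : Matrix (Fin 2) (Fin 2) ℂ := (Real.sqrt 2 : ℂ)⁻¹ • !![1, 1; 1, -1]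

/-- `G` is one of the generators `(-1)_[a]`, `X_[a,b]`, `H_[a,b]` with `a ≠ b`. -/
def IsRealGen {n : ℕ} (G : Matrix (Fin n) (Fin n) ℂ) : Prop :=
  (∃ a : Fin n, G = levelOp ![a] !![-1]) ∨
  (∃ a b : Fin n, a ≠ b ∧ G = levelOp ![a, b] Xmat) ∨
  (∃ a b : Fin n, a ≠ b ∧ G = levelOp ![a, b] Hmat)

/-- `x` is a dyadic fraction: an element of `ℤ[1/2]` (viewed inside `ℂ`). -/
def IsDyadic (x : ℂ) : Prop := ∃ (u : ℤ) (q : ℕ), x = (u : ℂ) / 2 ^ q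

/-- `x` belongs to the ring `ℤ[1/√2] = {x₀ + x₁√2 : x₀, x₁ ∈ ℤ[1/2]}`. -/
def InDSqrt2 (x : ℂ) : Prop :=
  ∃ x₀ x₁ : ℂ, IsDyadic x₀ ∧ IsDyadic x₁ ∧ x = x₀ + x₁ * Real.sqrt 2

/-!
Write the first column `v` of `V` as `v i = (a i + b i √2) / √2 ^ k` with integers `a i`, `b i`.
Since `v` is a real unit vector and `√2` is irrational, `∑ (a i ^ 2 + 2 b i ^ 2) = 2 ^ k` and
`∑ a i b i = 0`. If every `a i` is even, the exponent `k` drops by one. Otherwise these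
identities pair up the odd `a i`: there are `i ≠ j` with `a i`, `a j` odd and
`b i ≡ b j (mod 2)`, and `H_[i,j]` makes both even without raising `k`. At `k = 0` the vector is
`±e_{i₀}`, which `(-1)_[i₀]` and `X_[0,i₀]` move to `e_0`. A unitary matrix with first column
`e_0` is `1 ⊕ W'`, and we induct on the dimension.
-/

open scoped Finset

theorem ofReal_sqrt_two_mul_self : (√2 : ℂ) * √2 = 2 := by
  rw [← ofReal_mul, Real.mul_self_sqrt zero_le_two, ofReal_ofNat]

theorem ofReal_sqrt_two_ne_zero : (√2 : ℂ) ≠ 0 := by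
  simp

theorem int_eq_zero_of_add_mul_sqrt_two_eq_zero {a b : ℤ} (h : (a : ℂ) + b * √2 = 0) :
    a = 0 ∧ b = 0 := by
  have hr : (a : ℝ) + b * √2 = 0 := by exact_mod_cast congrArg re h
  have hb : b = 0 := by
    by_contra hb
    exact ((irrational_sqrt_two.intCast_mul hb).intCast_add a).ne_zero hr
  subst hb
  exact ⟨by exact_mod_cast (by simpa using hr), rfl⟩

theorem inDSqrt2_iff {x : ℂ} :
    InDSqrt2 x ↔ ∃ (N : ℕ) (a b : ℤ), x * 2 ^ N = a + b * √2 := by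
  constructor
  · rintro ⟨_, _, ⟨u, q, rfl⟩, ⟨w, p, rfl⟩, rfl⟩
    exact ⟨q + p, u * 2 ^ p, w * 2 ^ q, by push_cast; field_simp; ring⟩
  · rintro ⟨N, a, b, h⟩
    refine ⟨a / 2 ^ N, b / 2 ^ N, ⟨a, N, rfl⟩, ⟨b, N, rfl⟩, ?_⟩
    rw [div_mul_eq_mul_div, ← add_div, ← h]
    field_simp

def dyadicSqrtTwo : Subring ℂ where
  carrier := {x | InDSqrt2 x}
  zero_mem' := inDSqrt2_iff.mpr ⟨0, 0, 0, by simp⟩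
  one_mem' := inDSqrt2_iff.mpr ⟨0, 1, 0, by simp⟩
  add_mem' {x y} hx hy := by
    obtain ⟨N, a, b, hx⟩ := inDSqrt2_iff.mp hx
    obtain ⟨M, c, d, hy⟩ := inDSqrt2_iff.mp hy
    refine inDSqrt2_iff.mpr ⟨N + M, a * 2 ^ M + c * 2 ^ N, b * 2 ^ M + d * 2 ^ N, ?_⟩
    push_cast
    linear_combination (2 : ℂ) ^ M * hx + (2 : ℂ) ^ N * hy
  mul_mem' {x y} hx hy := by
    obtain ⟨N, a, b, hx⟩ := inDSqrt2_iff.mp hx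
    obtain ⟨M, c, d, hy⟩ := inDSqrt2_iff.mp hy
    refine inDSqrt2_iff.mpr ⟨N + M, a * c + 2 * b * d, a * d + b * c, ?_⟩
    push_cast
    linear_combination (y * 2 ^ M) * hx + (a + b * √2) * hy + b * d * ofReal_sqrt_two_mul_self
  neg_mem' {x} hx := by
    obtain ⟨N, a, b, hx⟩ := inDSqrt2_iff.mp hx
    exact inDSqrt2_iff.mpr ⟨N, -a, -b, by push_cast; linear_combination -hx⟩

theorem inv_sqrt_two_mem_dyadicSqrtTwo : (√2 : ℂ)⁻¹ ∈ dyadicSqrtTwo :=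
  inDSqrt2_iff.mpr ⟨1, 0, 1, by
    field_simp [ofReal_sqrt_two_ne_zero]
    linear_combination -ofReal_sqrt_two_mul_self⟩

theorem exists_mul_sqrt_two_pow_eq {n : ℕ} {v : Fin n → ℂ}
    (hv : ∀ i, v i ∈ dyadicSqrtTwo) :
    ∃ (k : ℕ) (a b : Fin n → ℤ), ∀ i, v i * √2 ^ k = a i + b i * √2 := by
  choose N a b h using fun i => inDSqrt2_iff.mp (hv i)
  set K := Finset.univ.sup N
  refine ⟨2 * K, fun i => a i * 2 ^ (K - N i), fun i => b i * 2 ^ (K - N i), fun i => ?_⟩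
  rw [pow_mul, sq, ofReal_sqrt_two_mul_self,
    ← pow_sub_mul_pow 2 (Finset.le_sup (Finset.mem_univ i)), mul_comm, mul_assoc,
    mul_comm _ (v i), h i]
  push_cast
  ring

section LevelOp
variable {n m : ℕ} {f : Fin m → Fin n}

theorem levelOp_mulVec_comp (hf : Function.Injective f) (W : Matrix (Fin m) (Fin m) ℂ)
    (v : Fin n → ℂ) : (levelOp f W *ᵥ v) ∘ f = W *ᵥ (v ∘ f) := by
  funext i
  simp [levelOp, mulVec, dotProduct, Finset.sum_mul, hf.eq_iff, ite_and]
  rw [Finset.sum_comm]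
  simp

theorem levelOp_mulVec_apply_of_notMem (W : Matrix (Fin m) (Fin m) ℂ) (v : Fin n → ℂ)
    {j : Fin n} (hj : j ∉ Set.range f) : (levelOp f W *ᵥ v) j = v j := by
  simp only [Set.mem_range, not_exists] at hj
  simp [levelOp, mulVec, dotProduct, hj]

theorem eq_levelOp_of_mulVec (hf : Function.Injective f) {M : Matrix (Fin n) (Fin n) ℂ}
    {W : Matrix (Fin m) (Fin m) ℂ} (h_comp : ∀ v, (M *ᵥ v) ∘ f = W *ᵥ (v ∘ f))
    (h_notMem : ∀ v, ∀ j ∉ Set.range f, (M *ᵥ v) j = v j) : M = levelOp f W := by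
  refine ext_iff_mulVec.mpr fun v => funext fun j => ?_
  by_cases hj : j ∈ Set.range f
  · obtain ⟨i, rfl⟩ := hj
    exact (congrFun (h_comp v) i).trans (congrFun (levelOp_mulVec_comp hf W v) i).symm
  · rw [h_notMem v j hj, levelOp_mulVec_apply_of_notMem W v hj]

theorem levelOp_apply_apply (hf : Function.Injective f) (W : Matrix (Fin m) (Fin m) ℂ)
    (i k : Fin m) : levelOp f W (f i) (f k) = W i k := by
  simp [levelOp, hf.eq_iff, ite_and]

theorem levelOp_apply_of_notMem_left (W : Matrix (Fin m) (Fin m) ℂ) {j : Fin n}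
    (hj : j ∉ Set.range f) (k : Fin n) :
    levelOp f W j k = (1 : Matrix (Fin n) (Fin n) ℂ) j k := by
  simp only [Set.mem_range, not_exists] at hj
  simp [levelOp, hj, one_apply]

theorem levelOp_apply_of_notMem_right (W : Matrix (Fin m) (Fin m) ℂ) (j : Fin n) {k : Fin n}
    (hk : k ∉ Set.range f) : levelOp f W j k = (1 : Matrix (Fin n) (Fin n) ℂ) j k := by
  simp only [Set.mem_range, not_exists] at hk
  by_cases h : j = k
  · subst h; simp [levelOp, hk]
  · simp [levelOp, hk, h]

theorem levelOp_apply_mem {S : Subring ℂ} {W : Matrix (Fin m) (Fin m) ℂ}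
    (hW : ∀ i k, W i k ∈ S) (j k : Fin n) : levelOp f W j k ∈ S :=
  add_mem (sum_mem fun _ _ => sum_mem fun _ _ => by split_ifs <;> simp [hW])
    (by split_ifs <;> simp)

theorem levelOp_injective (hf : Function.Injective f) :
    Function.Injective (levelOp (n := n) f) :=
  fun A B h => by ext i k; rw [← levelOp_apply_apply hf A, h, levelOp_apply_apply hf]

theorem levelOp_one (hf : Function.Injective f) : levelOp f (1 : Matrix (Fin m) (Fin m) ℂ) = 1 :=
  (eq_levelOp_of_mulVec hf (fun v => by simp) (fun v j _ => by simp)).symm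

theorem levelOp_mul (hf : Function.Injective f) (A B : Matrix (Fin m) (Fin m) ℂ) :
    levelOp f (A * B) = levelOp f A * levelOp f B := by
  refine (eq_levelOp_of_mulVec hf (fun v => ?_) (fun v j hj => ?_)).symm
  · rw [← mulVec_mulVec, levelOp_mulVec_comp hf, levelOp_mulVec_comp hf, mulVec_mulVec]
  · rw [← mulVec_mulVec, levelOp_mulVec_apply_of_notMem _ _ hj,
      levelOp_mulVec_apply_of_notMem _ _ hj]

theorem levelOp_levelOp {l : ℕ} {g : Fin n → Fin l} (hg : Function.Injective g)
    (hf : Function.Injective f) (W : Matrix (Fin m) (Fin m) ℂ) :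
    levelOp g (levelOp f W) = levelOp (g ∘ f) W := by
  refine eq_levelOp_of_mulVec (hg.comp hf) (fun v => ?_) (fun v j hj => ?_)
  · rw [← Function.comp_assoc, levelOp_mulVec_comp hg, levelOp_mulVec_comp hf,
      Function.comp_assoc]
  · by_cases hjg : j ∈ Set.range g
    · obtain ⟨i, rfl⟩ := hjg
      have hi : i ∉ Set.range f := fun ⟨i', hi'⟩ => hj ⟨i', by simp [hi']⟩
      rw [← Function.comp_apply (f := levelOp g _ *ᵥ v), levelOp_mulVec_comp hg,
        levelOp_mulVec_apply_of_notMem _ _ hi, Function.comp_apply]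
    · exact levelOp_mulVec_apply_of_notMem _ _ hjg

theorem conjTranspose_levelOp (W : Matrix (Fin m) (Fin m) ℂ) :
    (levelOp f W)ᴴ = levelOp f Wᴴ := by
  ext j k
  simp only [levelOp, conjTranspose_apply, star_add, star_sum, apply_ite (star : ℂ → ℂ),
    star_zero, star_one]
  rw [Finset.sum_comm]
  congr 1
  · simp only [and_comm]
  · by_cases h : j = k
    · subst h; rfl
    · simp [h, Ne.symm h]

theorem levelOp_mem_unitaryGroup_iff (hf : Function.Injective f) {W : Matrix (Fin m) (Fin m) ℂ} :
    levelOp f W ∈ unitaryGroup (Fin n) ℂ ↔ W ∈ unitaryGroup (Fin m) ℂ := by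
  rw [mem_unitaryGroup_iff', mem_unitaryGroup_iff', star_eq_conjTranspose, star_eq_conjTranspose,
    conjTranspose_levelOp, ← levelOp_mul hf, ← levelOp_one hf, (levelOp_injective hf).eq_iff]

end LevelOp

section Generators
variable {n : ℕ}

theorem injective_vecCons_pair {a b : Fin n} (h : a ≠ b) : Function.Injective ![a, b] := by
  intro i j
  fin_cases i <;> fin_cases j <;> simp [h, h.symm]

theorem levelOp_single_mulVec_apply (a : Fin n) (W : Matrix (Fin 1) (Fin 1) ℂ) (v : Fin n → ℂ)
    (x : Fin n) : (levelOp ![a] W *ᵥ v) x = if x = a then W 0 0 * v a else v x := by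
  split_ifs with hx
  · subst hx
    simpa [mulVec, dotProduct, Matrix.cons_val_fin_one] using
      congrFun (levelOp_mulVec_comp (Function.injective_of_subsingleton ![x]) W v) 0
  · exact levelOp_mulVec_apply_of_notMem W v (by simpa [eq_comm] using hx)

theorem levelOp_pair_mulVec_apply {a b : Fin n} (hab : a ≠ b) (W : Matrix (Fin 2) (Fin 2) ℂ)
    (v : Fin n → ℂ) (x : Fin n) :
    (levelOp ![a, b] W *ᵥ v) x = if x = a then W 0 0 * v a + W 0 1 * v b
      else if x = b then W 1 0 * v a + W 1 1 * v b else v x := by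
  have h := congrFun (levelOp_mulVec_comp (injective_vecCons_pair hab) W v)
  split_ifs with hxa hxb
  · subst hxa; simpa [mulVec, dotProduct] using h 0
  · subst hxb; simpa [mulVec, dotProduct] using h 1
  · exact levelOp_mulVec_apply_of_notMem W v (by simp [hxa, hxb])

theorem neg_one_mem_unitaryGroup : !![-1] ∈ unitaryGroup (Fin 1) ℂ := by
  rw [mem_unitaryGroup_iff']
  ext i j
  fin_cases i; fin_cases j
  simp [mul_apply]

theorem xmat_mem_unitaryGroup : Xmat ∈ unitaryGroup (Fin 2) ℂ := by
  rw [mem_unitaryGroup_iff']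
  ext i j
  fin_cases i <;> fin_cases j <;> simp [Xmat, mul_apply]

theorem hmat_mem_unitaryGroup : Hmat ∈ unitaryGroup (Fin 2) ℂ := by
  rw [mem_unitaryGroup_iff']
  ext i j
  fin_cases i <;> fin_cases j <;> simp [Hmat, mul_apply, Fin.sum_univ_two] <;>
    rw [← two_mul, ← mul_inv, ofReal_sqrt_two_mul_self, mul_inv_cancel₀ two_ne_zero]

namespace IsRealGen
variable {G : Matrix (Fin n) (Fin n) ℂ}

theorem mem_unitaryGroup (hG : IsRealGen G) : G ∈ unitaryGroup (Fin n) ℂ := by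
  rcases hG with ⟨a, rfl⟩ | ⟨a, b, hab, rfl⟩ | ⟨a, b, hab, rfl⟩
  · exact (levelOp_mem_unitaryGroup_iff (Function.injective_of_subsingleton _)).mpr
      neg_one_mem_unitaryGroup
  · exact (levelOp_mem_unitaryGroup_iff (injective_vecCons_pair hab)).mpr xmat_mem_unitaryGroup
  · exact (levelOp_mem_unitaryGroup_iff (injective_vecCons_pair hab)).mpr hmat_mem_unitaryGroup

theorem apply_mem (hG : IsRealGen G) (j k : Fin n) : G j k ∈ dyadicSqrtTwo := by
  rcases hG with ⟨a, rfl⟩ | ⟨a, b, hab, rfl⟩ | ⟨a, b, hab, rfl⟩ <;>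
    refine levelOp_apply_mem (fun i k => ?_) j k <;> fin_cases i <;> fin_cases k <;>
    simp [Xmat, Hmat, inv_sqrt_two_mem_dyadicSqrtTwo]

theorem levelOp_succ (hG : IsRealGen G) : IsRealGen (levelOp Fin.succ G) := by
  have hsucc {a b : Fin n} (hab : a ≠ b) : a.succ ≠ b.succ := by simpa using hab
  rcases hG with ⟨a, rfl⟩ | ⟨a, b, hab, rfl⟩ | ⟨a, b, hab, rfl⟩
  · refine Or.inl ⟨a.succ, ?_⟩
    rw [levelOp_levelOp (Fin.succ_injective _) (Function.injective_of_subsingleton _)]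
    congr 1; funext i; fin_cases i; rfl
  · refine Or.inr (Or.inl ⟨a.succ, b.succ, hsucc hab, ?_⟩)
    rw [levelOp_levelOp (Fin.succ_injective _) (injective_vecCons_pair hab)]
    congr 1; funext i; fin_cases i <;> rfl
  · refine Or.inr (Or.inr ⟨a.succ, b.succ, hsucc hab, ?_⟩)
    rw [levelOp_levelOp (Fin.succ_injective _) (injective_vecCons_pair hab)]
    congr 1; funext i; fin_cases i <;> rfl

end IsRealGen

theorem levelOp_neg_one_mulVec_single (a : Fin n) (s : ℂ) :
    levelOp ![a] !![-1] *ᵥ Pi.single a s = Pi.single a (-s) := by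
  funext x
  rw [levelOp_single_mulVec_apply]
  split_ifs with hx <;> simp [hx]

theorem levelOp_xmat_mulVec_single {a b : Fin n} (hab : a ≠ b) (s : ℂ) :
    levelOp ![a, b] Xmat *ᵥ Pi.single b s = Pi.single a s := by
  funext x
  rw [levelOp_pair_mulVec_apply hab]
  split_ifs with hxa hxb <;> simp [Xmat, *]

theorem levelOp_hmat_mulVec_apply {i j : Fin n} (hij : i ≠ j) (v : Fin n → ℂ) (x : Fin n) :
    (levelOp ![i, j] Hmat *ᵥ v) x =
      if x = i then (v i + v j) / √2 else if x = j then (v i - v j) / √2 else v x := by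
  rw [levelOp_pair_mulVec_apply hij]
  split_ifs <;> simp [Hmat] <;> ring

end Generators

def genSubmonoid (n : ℕ) : Submonoid (Matrix (Fin n) (Fin n) ℂ) :=
  Submonoid.closure {G | IsRealGen G}

section GenSubmonoid
variable {n : ℕ}

theorem IsRealGen.mem_genSubmonoid {G : Matrix (Fin n) (Fin n) ℂ} (hG : IsRealGen G) :
    G ∈ genSubmonoid n :=
  Submonoid.subset_closure hG

theorem genSubmonoid_le_unitaryGroup : genSubmonoid n ≤ unitaryGroup (Fin n) ℂ :=
  Submonoid.closure_le.mpr fun _ hG => IsRealGen.mem_unitaryGroup hG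

theorem apply_mem_of_mem_genSubmonoid {P : Matrix (Fin n) (Fin n) ℂ} (hP : P ∈ genSubmonoid n)
    (j k : Fin n) : P j k ∈ dyadicSqrtTwo := by
  induction hP using Submonoid.closure_induction generalizing j k with
  | mem G hG => exact IsRealGen.apply_mem hG j k
  | one => rw [one_apply]; split_ifs <;> simp
  | mul A B _ _ hA hB => rw [mul_apply]; exact sum_mem fun i _ => mul_mem (hA j i) (hB i k)

theorem levelOp_succ_mem_genSubmonoid {P : Matrix (Fin n) (Fin n) ℂ} (hP : P ∈ genSubmonoid n) :
    levelOp Fin.succ P ∈ genSubmonoid (n + 1) := by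
  induction hP using Submonoid.closure_induction with
  | mem G hG => exact (IsRealGen.levelOp_succ hG).mem_genSubmonoid
  | one => rw [levelOp_one (Fin.succ_injective _)]; exact one_mem _
  | mul A B _ _ hA hB => rw [levelOp_mul (Fin.succ_injective _)]; exact mul_mem hA hB

theorem star_mulVec_dotProduct_mulVec {U : Matrix (Fin n) (Fin n) ℂ}
    (hU : U ∈ unitaryGroup (Fin n) ℂ) (v : Fin n → ℂ) :
    star (U *ᵥ v) ⬝ᵥ (U *ᵥ v) = star v ⬝ᵥ v := by
  rw [star_mulVec, ← dotProduct_mulVec, mulVec_mulVec, ← star_eq_conjTranspose,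
    mem_unitaryGroup_iff'.mp hU, one_mulVec]

end GenSubmonoid

theorem Finset.even_sum_iff_even_card_odd_int {ι : Type*} (s : Finset ι) (c : ι → ℤ) :
    Even (∑ i ∈ s, c i) ↔ Even #{i ∈ s | Odd (c i)} := by
  rw [← ZMod.intCast_eq_zero_iff_even, ← ZMod.natCast_eq_zero_iff_even, Int.cast_sum,
    Finset.natCast_card_filter]
  refine Eq.congr_left (Finset.sum_congr rfl fun i _ => ?_)
  split_ifs with h
  · exact ZMod.intCast_eq_one_iff_odd.mpr h
  · exact ZMod.intCast_eq_zero_iff_even.mpr (Int.not_odd_iff_even.mp h)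

section ColumnReduction
variable {n : ℕ}

theorem sum_sq_eq_two_pow_of_mul_sqrt_two_pow {k : ℕ} {v : Fin n → ℂ} {a b : Fin n → ℤ}
    (hv : ∀ i, v i * √2 ^ k = a i + b i * √2) (hnorm : star v ⬝ᵥ v = 1) :
    ∑ i, (a i ^ 2 + 2 * b i ^ 2) = 2 ^ k ∧ ∑ i, a i * b i = 0 := by
  have hpow : (√2 : ℂ) ^ k ≠ 0 := pow_ne_zero k ofReal_sqrt_two_ne_zero
  have hreal (i : Fin n) : star (v i) = v i := by
    refine mul_right_cancel₀ hpow ((?_ : star (v i) * √2 ^ k = _).trans (hv i).symm)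
    simpa [conj_ofReal] using congrArg star (hv i)
  have hsq (i : Fin n) : ((a i : ℂ) + b i * √2) ^ 2
      = ((a i ^ 2 + 2 * b i ^ 2 : ℤ) : ℂ) + ((2 * (a i * b i) : ℤ) : ℂ) * √2 := by
    push_cast
    linear_combination (b i : ℂ) ^ 2 * ofReal_sqrt_two_mul_self
  have htotal : ∑ i, ((a i : ℂ) + b i * √2) ^ 2 = 2 ^ k := by
    simp_rw [← hv, mul_pow, ← Finset.sum_mul, ← pow_mul, mul_comm k 2, pow_mul, sq,
      ofReal_sqrt_two_mul_self]
    simpa [dotProduct, hreal] using congrArg (· * (2 : ℂ) ^ k) hnorm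
  simp_rw [hsq, Finset.sum_add_distrib, ← Finset.sum_mul, ← Int.cast_sum] at htotal
  obtain ⟨h₁, h₂⟩ := int_eq_zero_of_add_mul_sqrt_two_eq_zero
    (a := ∑ i, (a i ^ 2 + 2 * b i ^ 2) - 2 ^ k) (b := ∑ i, 2 * (a i * b i))
    (by push_cast at htotal ⊢; linear_combination htotal)
  rw [← Finset.mul_sum] at h₂
  omega

theorem exists_eq_single_of_sum_sq_eq_one {a b : Fin n → ℤ}
    (h : ∑ i, (a i ^ 2 + 2 * b i ^ 2) = 1) :
    ∃ i₀, (a i₀ = 1 ∨ a i₀ = -1) ∧ b i₀ = 0 ∧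
      ∀ i ≠ i₀, a i = 0 ∧ b i = 0 := by
  have hnn (i : Fin n) : 0 ≤ a i ^ 2 + 2 * b i ^ 2 := by positivity
  obtain ⟨i₀, hi₀⟩ : ∃ i₀, a i₀ ≠ 0 := by
    by_contra! h0
    simp [h0, ← Finset.mul_sum] at h
    omega
  have hle : a i₀ ^ 2 + 2 * b i₀ ^ 2 ≤ 1 :=
    h ▸ Finset.single_le_sum (fun i _ => hnn i) (Finset.mem_univ i₀)
  have hpos : 0 < a i₀ ^ 2 := by positivity
  refine ⟨i₀, ?_, by nlinarith, fun i hi => ?_⟩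
  · exact sq_eq_one_iff.mp (by nlinarith)
  · have hpair := Finset.sum_le_sum_of_subset_of_nonneg (Finset.subset_univ {i₀, i})
      (fun j _ _ => hnn j)
    rw [Finset.sum_pair hi.symm, h] at hpair
    constructor <;> nlinarith [hnn i]

theorem exists_mem_genSubmonoid_mulVec_single (i t : Fin n) {s : ℂ} (hs : s = 1 ∨ s = -1) :
    ∃ P ∈ genSubmonoid n, P *ᵥ Pi.single i s = Pi.single t 1 := by
  obtain ⟨P, hP, hPs⟩ : ∃ P ∈ genSubmonoid n, P *ᵥ Pi.single i s = Pi.single i 1 := by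
    rcases hs with rfl | rfl
    · exact ⟨1, one_mem _, one_mulVec _⟩
    · exact ⟨_, IsRealGen.mem_genSubmonoid (Or.inl ⟨i, rfl⟩),
        by rw [levelOp_neg_one_mulVec_single, neg_neg]⟩
  rcases eq_or_ne i t with rfl | hit
  · exact ⟨P, hP, hPs⟩
  · have hX : IsRealGen (levelOp ![t, i] Xmat) := Or.inr (Or.inl ⟨t, i, hit.symm, rfl⟩)
    exact ⟨_, mul_mem hX.mem_genSubmonoid hP,
      by rw [← mulVec_mulVec, hPs, levelOp_xmat_mulVec_single hit.symm]⟩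

theorem exists_mem_genSubmonoid_mulVec_eq_single_of_zero {v : Fin n → ℂ} {a b : Fin n → ℤ}
    (hv : ∀ i, v i = a i + b i * √2) (hnorm : star v ⬝ᵥ v = 1) (t : Fin n) :
    ∃ P ∈ genSubmonoid n, P *ᵥ v = Pi.single t 1 := by
  obtain ⟨hsq, -⟩ := sum_sq_eq_two_pow_of_mul_sqrt_two_pow (k := 0) (by simpa using hv) hnorm
  obtain ⟨i₀, ha, hb, hzero⟩ := exists_eq_single_of_sum_sq_eq_one (hsq.trans (pow_zero 2))
  have hvs : v = Pi.single i₀ (a i₀ : ℂ) := by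
    funext i
    rcases eq_or_ne i i₀ with rfl | hi
    · simp [hv, hb]
    · simp [hv, hzero i hi, hi]
  rw [hvs]
  exact exists_mem_genSubmonoid_mulVec_single i₀ t (by rcases ha with h | h <;> simp [h])

theorem mul_sqrt_two_pow_of_even {k : ℕ} {v : Fin n → ℂ} {a b c : Fin n → ℤ}
    (hv : ∀ i, v i * √2 ^ (k + 1) = a i + b i * √2) (hc : ∀ i, a i = c i + c i)
    (i : Fin n) :
    v i * √2 ^ k = b i + c i * √2 := by
  refine mul_right_cancel₀ ofReal_sqrt_two_ne_zero ?_
  have hci : (a i : ℂ) = c i + c i := by exact_mod_cast hc i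
  linear_combination hv i + hci - (c i : ℂ) * ofReal_sqrt_two_mul_self

theorem even_sum_of_sum_sq_eq_two_pow {k : ℕ} {a b : Fin n → ℤ}
    (h : ∑ i, (a i ^ 2 + 2 * b i ^ 2) = 2 ^ (k + 1)) : Even (∑ i, a i) := by
  have h2 : Even (∑ i, (a i ^ 2 + 2 * b i ^ 2)) := h ▸ (even_two.pow_of_ne_zero k.succ_ne_zero)
  rw [Finset.even_sum_iff_even_card_odd_int] at h2 ⊢
  simpa [parity_simps] using h2

theorem exists_ne_odd_even_add {a b : Fin n → ℤ} (ha : Even (∑ i, a i))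
    (hab : Even (∑ i, a i * b i)) {i₀ : Fin n} (hi₀ : Odd (a i₀)) :
    ∃ j ≠ i₀, Odd (a j) ∧ Even (b i₀ + b j) := by
  -- `a i * (b i + b i₀ + 1)` is odd iff `a i` is odd and `b i ≡ b i₀ (mod 2)`
  set C : Finset (Fin n) := {i | Odd (a i * (b i + b i₀ + 1))}
  have hC : Even #C := by
    rw [← Finset.even_sum_iff_even_card_odd_int]
    have : ∑ i, a i * (b i + b i₀ + 1) = ∑ i, a i * b i + (b i₀ + 1) * ∑ i, a i := by
      rw [Finset.mul_sum, ← Finset.sum_add_distrib]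
      exact Finset.sum_congr rfl fun i _ => by ring
    exact this ▸ hab.add (ha.mul_left _)
  have hi₀C : i₀ ∈ C := by simp [C, Int.odd_mul, hi₀, parity_simps]
  obtain ⟨j, hjC, hji₀⟩ := C.exists_mem_ne (by
    obtain ⟨r, hr⟩ := hC
    have := Finset.card_pos.mpr ⟨i₀, hi₀C⟩
    omega) i₀
  simp only [C, Finset.mem_filter, Finset.mem_univ, true_and, Int.odd_mul] at hjC
  exact ⟨j, hji₀, hjC.1, by simpa [parity_simps, add_comm] using hjC.2⟩

theorem exists_levelOp_hmat_mulVec_mul_sqrt_two_pow {k : ℕ} {v : Fin n → ℂ}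
    {a b : Fin n → ℤ} (hv : ∀ x, v x * √2 ^ k = a x + b x * √2) {i j : Fin n}
    (hij : i ≠ j) (hi : Odd (a i)) (hj : Odd (a j)) (hb : Even (b i + b j)) :
    ∃ a' b' : Fin n → ℤ,
      (∀ x, (levelOp ![i, j] Hmat *ᵥ v) x * √2 ^ k = a' x + b' x * √2) ∧
      #{x | Odd (a' x)} < #{x | Odd (a x)} := by
  obtain ⟨p, hp⟩ := hi.add_odd hj
  obtain ⟨q, hq⟩ := hi.sub_odd hj
  have hp' : (a i : ℂ) + a j = p + p := by exact_mod_cast hp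
  have hq' : (a i : ℂ) - a j = q + q := by exact_mod_cast hq
  refine ⟨fun x => if x = i then b i + b j else if x = j then b i - b j else a x,
    fun x => if x = i then p else if x = j then q else b x, fun x => ?_, ?_⟩
  · rw [levelOp_hmat_mulVec_apply hij]
    dsimp only
    split_ifs
    · field_simp
      push_cast
      linear_combination hv i + hv j + hp' - p * ofReal_sqrt_two_mul_self
    · field_simp
      push_cast
      linear_combination hv i - hv j + hq' - q * ofReal_sqrt_two_mul_self
    · exact hv x
  · refine (Finset.card_le_card fun x hx => ?_).trans_lt
      (Finset.card_erase_lt_of_mem (s := {x | Odd (a x)}) (by simpa using hi))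
    simp only [Finset.mem_filter, Finset.mem_univ, true_and, Finset.mem_erase] at hx ⊢
    split_ifs at hx with hxi hxj
    · exact absurd hx (Int.not_odd_iff_even.mpr hb)
    · exact absurd hx (Int.not_odd_iff_even.mpr (by simpa [parity_simps] using hb))
    · exact ⟨hxi, hx⟩

theorem exists_mem_genSubmonoid_mulVec_mul_sqrt_two_pow {k : ℕ} {v : Fin n → ℂ}
    {a b : Fin n → ℤ} (hv : ∀ i, v i * √2 ^ (k + 1) = a i + b i * √2)
    (hnorm : star v ⬝ᵥ v = 1) :
    ∃ P ∈ genSubmonoid n, ∃ a' b' : Fin n → ℤ,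
      ∀ i, (P *ᵥ v) i * √2 ^ k = a' i + b' i * √2 := by
  induction hc : #{i | Odd (a i)} using Nat.strong_induction_on generalizing v a b with
  | _ c ih =>
  by_cases hodd : ∃ i₀, Odd (a i₀)
  · obtain ⟨i₀, hi₀⟩ := hodd
    obtain ⟨hsq, hab⟩ := sum_sq_eq_two_pow_of_mul_sqrt_two_pow hv hnorm
    obtain ⟨j, hji₀, hj, hb⟩ := exists_ne_odd_even_add (b := b)
      (even_sum_of_sum_sq_eq_two_pow hsq) (by simp [hab]) hi₀
    have hH : levelOp ![i₀, j] Hmat ∈ genSubmonoid n :=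
      IsRealGen.mem_genSubmonoid (Or.inr (Or.inr ⟨i₀, j, hji₀.symm, rfl⟩))
    obtain ⟨a₁, b₁, hv₁, hlt⟩ :=
      exists_levelOp_hmat_mulVec_mul_sqrt_two_pow hv hji₀.symm hi₀ hj hb
    obtain ⟨P, hP, a', b', h'⟩ := ih _ (hc ▸ hlt) hv₁
      (by rw [star_mulVec_dotProduct_mulVec (genSubmonoid_le_unitaryGroup hH), hnorm]) rfl
    exact ⟨P * levelOp ![i₀, j] Hmat, mul_mem hP hH, a', b',
      by simpa [mulVec_mulVec] using h'⟩
  · rw [not_exists] at hodd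
    choose half hhalf using fun i => Int.not_odd_iff_even.mp (hodd i)
    exact ⟨1, one_mem _, b, half, by simpa using mul_sqrt_two_pow_of_even hv hhalf⟩

theorem exists_mem_genSubmonoid_mulVec_eq_single (k : ℕ) {v : Fin n → ℂ} {a b : Fin n → ℤ}
    (hv : ∀ i, v i * √2 ^ k = a i + b i * √2) (hnorm : star v ⬝ᵥ v = 1) (t : Fin n) :
    ∃ P ∈ genSubmonoid n, P *ᵥ v = Pi.single t 1 := by
  induction k generalizing v a b with
  | zero => exact exists_mem_genSubmonoid_mulVec_eq_single_of_zero (by simpa using hv) hnorm t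
  | succ k ih =>
    obtain ⟨P, hP, a', b', h'⟩ := exists_mem_genSubmonoid_mulVec_mul_sqrt_two_pow hv hnorm
    obtain ⟨Q, hQ, hQv⟩ := ih h'
      (by rw [star_mulVec_dotProduct_mulVec (genSubmonoid_le_unitaryGroup hP), hnorm])
    exact ⟨Q * P, mul_mem hQ hP, by rw [← mulVec_mulVec, hQv]⟩

end ColumnReduction

theorem eq_levelOp_succ_of_mulVec_single {m : ℕ} {W : Matrix (Fin (m + 1)) (Fin (m + 1)) ℂ}
    (hW : W ∈ unitaryGroup (Fin (m + 1)) ℂ) (hW0 : W *ᵥ Pi.single 0 1 = Pi.single 0 1) :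
    W = levelOp Fin.succ (W.submatrix Fin.succ Fin.succ) := by
  have hcol (i : Fin (m + 1)) : W i 0 = Pi.single (M := fun _ => ℂ) 0 1 i := by
    simpa [mulVec_single_one] using congrFun hW0 i
  have hrow (j : Fin (m + 1)) : W 0 j = Pi.single (M := fun _ => ℂ) 0 1 j := by
    have := congrFun (congrFun (mem_unitaryGroup_iff'.mp hW) 0) j
    simp only [star_eq_conjTranspose, mul_apply, conjTranspose_apply, hcol] at this
    simpa [Pi.single_apply, one_apply, eq_comm] using this
  have h0 : (0 : Fin (m + 1)) ∉ Set.range Fin.succ := by simp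
  ext i j
  induction i using Fin.cases <;> induction j using Fin.cases
  · rw [levelOp_apply_of_notMem_left _ h0, hcol]; simp
  · rw [levelOp_apply_of_notMem_left _ h0, hrow]; simp [one_apply, (Fin.succ_ne_zero _).symm]
  · rw [levelOp_apply_of_notMem_right _ _ h0, hcol]; simp [Fin.succ_ne_zero]
  · rw [levelOp_apply_apply (Fin.succ_injective _)]; rfl

theorem exists_mem_genSubmonoid_mul_eq_one {n : ℕ} {V : Matrix (Fin n) (Fin n) ℂ}
    (hV : V ∈ unitaryGroup (Fin n) ℂ) (hR : ∀ j k, V j k ∈ dyadicSqrtTwo) :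
    ∃ P ∈ genSubmonoid n, P * V = 1 := by
  induction n with
  | zero => exact ⟨1, one_mem _, Subsingleton.elim _ _⟩
  | succ m ih =>
    obtain ⟨k, a, b, hab⟩ := exists_mul_sqrt_two_pow_eq fun i => hR i 0
    obtain ⟨P, hP, hPV⟩ := exists_mem_genSubmonoid_mulVec_eq_single k
      (v := V *ᵥ Pi.single 0 1) (by simpa [mulVec_single_one] using hab)
      (by rw [star_mulVec_dotProduct_mulVec hV]; simp) 0
    have hW : P * V ∈ unitaryGroup (Fin (m + 1)) ℂ :=
      mul_mem (genSubmonoid_le_unitaryGroup hP) hV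
    have hblock := eq_levelOp_succ_of_mulVec_single hW (by rw [← mulVec_mulVec, hPV])
    obtain ⟨Q, hQ, hQW⟩ := ih
      ((levelOp_mem_unitaryGroup_iff (Fin.succ_injective _)).mp (hblock ▸ hW))
      fun j k => by
        rw [submatrix_apply, mul_apply]
        exact sum_mem fun i _ => mul_mem (apply_mem_of_mem_genSubmonoid hP _ _) (hR _ _)
    refine ⟨levelOp Fin.succ Q * P, mul_mem (levelOp_succ_mem_genSubmonoid hQ) hP, ?_⟩
    rw [mul_assoc, hblock, ← levelOp_mul (Fin.succ_injective _), hQW,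
      levelOp_one (Fin.succ_injective _)]

theorem stmt2_general (n : ℕ) (V : Matrix (Fin n) (Fin n) ℂ)
    (hV : V ∈ Matrix.unitaryGroup (Fin n) ℂ)
    (hR : ∀ j k, InDSqrt2 (V j k)) :
    ∃ L : List (Matrix (Fin n) (Fin n) ℂ),
      (∀ G ∈ L, IsRealGen G) ∧ L.prod * V = 1 := by
  obtain ⟨P, hP, hPV⟩ := exists_mem_genSubmonoid_mul_eq_one hV hR
  obtain ⟨L, hL, rfl⟩ := Submonoid.exists_list_of_mem_closure hP
  exact ⟨L, hL, hPV⟩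

/-- Every unitary matrix with entries in `ℤ[1/√2]` is a product of the
generators `(-1)_[a]`, `X_[a,b]`, `H_[a,b]`. -/
theorem stmt2 (n : ℕ) (hn : 1 ≤ n) (V : Matrix (Fin n) (Fin n) ℂ)
    (hV : V ∈ Matrix.unitaryGroup (Fin n) ℂ)
    (hR : ∀ j k, InDSqrt2 (V j k)) :
    ∃ L : List (Matrix (Fin n) (Fin n) ℂ),
      (∀ G ∈ L, IsRealGen G) ∧ L.prod * V = 1 :=
  stmt2_general n V hV hR
end
end

section
/- Let n ≥ 4 and let v be an n-dimensional unit vector all of whose entries lie in ℤ[1/2], with lde₂(v) > 0. Then there exist finitely many generators G₁, …, G_ℓ, each taken from the set {(-1)_[a], X_[a,b], (H⊗H)_[a,b,c,d] : a, b, c, d distinct elements of {1,…,n}}, such that v' = G₁ ⋯ G_ℓ v satisfies lde₂(v') < lde₂(v). -/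
open Matrix Complex

noncomputable section

/-- The Kronecker product `H ⊗ H`, a 4×4 matrix. -/
def HHmat : Matrix (Fin 4) (Fin 4) ℂ :=
  (2 : ℂ)⁻¹ • !![1, 1, 1, 1; 1, -1, 1, -1; 1, 1, -1, -1; 1, -1, -1, 1]

/-- `G` is one of the generators `(-1)_[a]`, `X_[a,b]`, `(H⊗H)_[a,b,c,d]`
with `a, b, c, d` distinct. -/
def IsIntGen {n : ℕ} (G : Matrix (Fin n) (Fin n) ℂ) : Prop :=
  (∃ a : Fin n, G = levelOp ![a] !![-1]) ∨
  (∃ a b : Fin n, a ≠ b ∧ G = levelOp ![a, b] Xmat) ∨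
  (∃ a b c d : Fin n, a ≠ b ∧ a ≠ c ∧ a ≠ d ∧ b ≠ c ∧ b ≠ d ∧ c ≠ d ∧
    G = levelOp ![a, b, c, d] HHmat)

/-- The least 2-denominator exponent of a vector `v` with entries in `ℤ[1/2]`:
the least `q : ℕ` such that `2^q · v` has integer entries. -/
def lde2 {n : ℕ} (v : Fin n → ℂ) : ℕ :=
  sInf {q : ℕ | ∀ j, ∃ u : ℤ, (2 : ℂ) ^ q * v j = (u : ℂ)}


/-!
Write `v = w / 2^q` with `w` an integer vector and `q = lde₂ v > 0`. Then `∑ wⱼ² = 4^q ≡ 0`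
modulo 4, and odd squares are `1` modulo 4, so the number of odd entries of `w` is divisible
by four. Take four odd entries and flip signs with `(-1)_[a]` until each is `1` modulo 4; every
row of `2 (H ⊗ H)` has an even number of minus signs, so applying `(H ⊗ H)` to them gives entries
`(±wₐ ± w_b ± w_c ± w_d) / 2` with numerators divisible by four, i.e. even integers. Repeating
this on groups of four odd entries makes `w` even, so `2^(q-1)` already clears the denominators.
-/

namespace levelOp

variable {n m : ℕ} {f : Fin m → Fin n} (W : Matrix (Fin m) (Fin m) ℂ) (v : Fin n → ℂ)

theorem mulVec_apply_of_notMem_range {j : Fin n} (hj : j ∉ Set.range f) :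
    (levelOp f W *ᵥ v) j = v j := by
  have hj' : ∀ i, f i ≠ j := fun i h => hj ⟨i, h⟩
  have hrow : levelOp f W j = Pi.single j 1 := by
    ext k
    simp [levelOp, hj', Pi.single_apply, eq_comm]
  simp [mulVec, hrow]

theorem mulVec_apply_self (hf : Function.Injective f) (i : Fin m) :
    (levelOp f W *ᵥ v) (f i) = ∑ k, W i k * v (f k) := by
  have hrow : ∀ k, levelOp f W (f i) k = ∑ k', if f k' = k then W i k' else 0 := by
    intro k
    simp only [levelOp, hf.eq_iff, ite_and]
    simp
  simp only [mulVec, dotProduct, hrow, Finset.sum_mul, ite_mul, zero_mul]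
  rw [Finset.sum_comm]
  simp

end levelOp

theorem levelOp_neg_one_mulVec {n : ℕ} (a : Fin n) (v : Fin n → ℂ) :
    levelOp ![a] !![-1] *ᵥ v = Function.update v a (-v a) := by
  ext j
  rcases eq_or_ne j a with rfl | hj
  · have hf : Function.Injective ![j] := fun _ _ _ => Subsingleton.elim _ _
    simpa using levelOp.mulVec_apply_self !![-1] v hf 0
  · rw [levelOp.mulVec_apply_of_notMem_range _ _ (by simpa [eq_comm] using hj),
      Function.update_of_ne hj]

theorem levelOp_HHmat_mulVec {n : ℕ} {a b c d : Fin n}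
    (hab : a ≠ b) (hac : a ≠ c) (had : a ≠ d) (hbc : b ≠ c) (hbd : b ≠ d) (hcd : c ≠ d) (v : Fin n → ℂ) :
    levelOp ![a, b, c, d] HHmat *ᵥ v =
      Function.update (Function.update (Function.update (Function.update v
        a (2⁻¹ * (v a + v b + v c + v d)))
        b (2⁻¹ * (v a - v b + v c - v d)))
        c (2⁻¹ * (v a + v b - v c - v d)))
        d (2⁻¹ * (v a - v b - v c + v d)) := by
  have hf : Function.Injective ![a, b, c, d] := by
    intro i k h
    fin_cases i <;> fin_cases k <;> simp_all [eq_comm]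
  ext j
  by_cases hj : j ∈ Set.range ![a, b, c, d]
  · obtain ⟨i, rfl⟩ := hj
    rw [levelOp.mulVec_apply_self _ _ hf, Fin.sum_univ_four]
    fin_cases i <;> simp [HHmat, hab, hac, had, hbc, hbd, hcd] <;> ring
  · rw [levelOp.mulVec_apply_of_notMem_range _ _ hj]
    simp only [Set.mem_range, Fin.exists_fin_succ, not_or] at hj
    simp_all [Function.update_of_ne, eq_comm]

def ReachableByGens {n : ℕ} (v v' : Fin n → ℂ) : Prop :=
  ∃ L : List (Matrix (Fin n) (Fin n) ℂ), (∀ G ∈ L, IsIntGen G) ∧ L.prod *ᵥ v = v'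

namespace ReachableByGens

variable {n : ℕ} {u v w : Fin n → ℂ}

theorem refl (v : Fin n → ℂ) : ReachableByGens v v :=
  ⟨[], by simp, by simp⟩

theorem of_isIntGen {G : Matrix (Fin n) (Fin n) ℂ} (hG : IsIntGen G) (v : Fin n → ℂ) :
    ReachableByGens v (G *ᵥ v) :=
  ⟨[G], by simpa using hG, by simp⟩

theorem trans (huv : ReachableByGens u v) (hvw : ReachableByGens v w) : ReachableByGens u w := by
  obtain ⟨L₁, hL₁, rfl⟩ := huv
  obtain ⟨L₂, hL₂, rfl⟩ := hvw
  refine ⟨L₂ ++ L₁, fun G hG => ?_, by rw [List.prod_append, mulVec_mulVec]⟩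
  rcases List.mem_append.mp hG with hG | hG
  exacts [hL₂ G hG, hL₁ G hG]

end ReachableByGens

def oddSupport {n : ℕ} (w : Fin n → ℤ) : Finset (Fin n) := {j | Odd (w j)}

theorem exists_reachable_update_emod_four_eq_one {n : ℕ} (w : Fin n → ℤ) (a : Fin n)
    (ha : Odd (w a)) :
    ∃ s : ℤ, s % 4 = 1 ∧
      ReachableByGens (fun j => (w j : ℂ)) (fun j => (Function.update w a s j : ℂ)) := by
  obtain ⟨k, hk⟩ := ha
  by_cases h : w a % 4 = 1
  · exact ⟨w a, h, by simpa using .refl _⟩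
  refine ⟨-w a, by omega, ?_⟩
  convert ReachableByGens.of_isIntGen (Or.inl ⟨a, rfl⟩) _ using 1
  rw [levelOp_neg_one_mulVec]
  ext j
  rcases eq_or_ne j a with rfl | hj <;> simp [*]

theorem exists_reachable_oddSupport_sdiff_of_emod_four_eq_one {n : ℕ} (w : Fin n → ℤ)
    {a b c d : Fin n} (hab : a ≠ b) (hac : a ≠ c) (had : a ≠ d)
    (hbc : b ≠ c) (hbd : b ≠ d) (hcd : c ≠ d)
    (ha : w a % 4 = 1) (hb : w b % 4 = 1) (hc : w c % 4 = 1) (hd : w d % 4 = 1) :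
    ∃ w' : Fin n → ℤ, ReachableByGens (fun j => (w j : ℂ)) (fun j => (w' j : ℂ)) ∧
      oddSupport w' = oddSupport w \ {a, b, c, d} := by
  obtain ⟨ma, hma⟩ : 4 ∣ w a + w b + w c + w d := by omega
  obtain ⟨mb, hmb⟩ : 4 ∣ w a - w b + w c - w d := by omega
  obtain ⟨mc, hmc⟩ : 4 ∣ w a + w b - w c - w d := by omega
  obtain ⟨md, hmd⟩ : 4 ∣ w a - w b - w c + w d := by omega
  refine ⟨Function.update (Function.update (Function.update (Function.update w
    a (2 * ma)) b (2 * mb)) c (2 * mc)) d (2 * md), ?_, ?_⟩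
  · convert ReachableByGens.of_isIntGen
      (Or.inr (Or.inr ⟨a, b, c, d, hab, hac, had, hbc, hbd, hcd, rfl⟩)) _ using 1
    rw [levelOp_HHmat_mulVec hab hac had hbc hbd hcd]
    have half : ∀ {x m : ℤ}, x = 4 * m → (2⁻¹ * x : ℂ) = 2 * m := by
      rintro x m rfl; push_cast; ring
    have hA := half hma
    have hB := half hmb
    have hC := half hmc
    have hD := half hmd
    push_cast at hA hB hC hD
    ext j
    simp only [Function.update_apply]
    split_ifs <;> push_cast [hA, hB, hC, hD] <;> rfl
  · ext j
    simp only [oddSupport, Finset.mem_filter, Finset.mem_univ, true_and, Finset.mem_sdiff,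
      Finset.mem_insert, Finset.mem_singleton, Function.update_apply]
    split_ifs <;> simp [*, Int.not_odd_iff_even]

theorem exists_reachable_emod_four_eq_one {n : ℕ} (w : Fin n → ℤ) (S : Finset (Fin n))
    (hS : ∀ j ∈ S, Odd (w j)) :
    ∃ w' : Fin n → ℤ, ReachableByGens (fun j => (w j : ℂ)) (fun j => (w' j : ℂ)) ∧
      (∀ j ∈ S, w' j % 4 = 1) ∧ ∀ j ∉ S, w' j = w j := by
  induction S using Finset.induction_on with
  | empty => exact ⟨w, .refl _, by simp, fun _ _ => rfl⟩
  | insert a S haS ih =>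
    obtain ⟨w₁, h₁, hS₁, hout₁⟩ := ih fun j hj => hS j (Finset.mem_insert_of_mem hj)
    have ha : Odd (w₁ a) := hout₁ a haS ▸ hS a (Finset.mem_insert_self a S)
    obtain ⟨s, hs, h₂⟩ := exists_reachable_update_emod_four_eq_one w₁ a ha
    refine ⟨Function.update w₁ a s, h₁.trans h₂, fun j hj => ?_, fun j hj => ?_⟩
    · rcases eq_or_ne j a with rfl | hja
      · simpa using hs
      · simpa [hja] using hS₁ j (Finset.mem_of_mem_insert_of_ne hj hja)
    · rw [Finset.mem_insert, not_or] at hj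
      simp [hj.1, hout₁ j hj.2]

theorem exists_reachable_oddSupport_sdiff_of_card_eq_four {n : ℕ} (w : Fin n → ℤ)
    {Q : Finset (Fin n)} (hQ : Q ⊆ oddSupport w) (hQ4 : Q.card = 4) :
    ∃ w' : Fin n → ℤ, ReachableByGens (fun j => (w j : ℂ)) (fun j => (w' j : ℂ)) ∧
      oddSupport w' = oddSupport w \ Q := by
  obtain ⟨w₁, h₁, hQ₁, hout₁⟩ :=
    exists_reachable_emod_four_eq_one w Q fun j hj => by simpa [oddSupport] using hQ hj
  have hsupp₁ : oddSupport w₁ = oddSupport w := by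
    ext j
    by_cases hj : j ∈ Q
    · have hodd : Odd (w₁ j) := Int.odd_iff.mpr (by have := hQ₁ j hj; omega)
      simpa [oddSupport, hodd] using hQ hj
    · simp [oddSupport, hout₁ j hj]
  obtain ⟨a, b, c, d, hab, hac, had, hbc, hbd, hcd, rfl⟩ := Finset.card_eq_four.mp hQ4
  obtain ⟨w₂, h₂, hsupp₂⟩ :=
    exists_reachable_oddSupport_sdiff_of_emod_four_eq_one w₁ hab hac had hbc hbd hcd
    (hQ₁ a (by simp)) (hQ₁ b (by simp)) (hQ₁ c (by simp)) (hQ₁ d (by simp))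
  exact ⟨w₂, h₁.trans h₂, by rw [hsupp₂, hsupp₁]⟩

theorem exists_reachable_even {n : ℕ} (w : Fin n → ℤ) (h : 4 ∣ (oddSupport w).card) :
    ∃ w' : Fin n → ℤ, ReachableByGens (fun j => (w j : ℂ)) (fun j => (w' j : ℂ)) ∧
      ∀ j, Even (w' j) := by
  obtain ⟨t, ht⟩ := h
  induction t generalizing w with
  | zero =>
    refine ⟨w, .refl _, fun j => Int.not_odd_iff_even.mp fun hj => ?_⟩
    have : j ∈ oddSupport w := by simpa [oddSupport] using hj
    simp_all
  | succ t ih =>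
    obtain ⟨Q, hQ, hQ4⟩ :=
      Finset.exists_subset_card_eq (show 4 ≤ (oddSupport w).card by omega)
    obtain ⟨w₁, h₁, hsupp⟩ := exists_reachable_oddSupport_sdiff_of_card_eq_four w hQ hQ4
    obtain ⟨w₂, h₂, heven⟩ :=
      ih w₁ (by rw [hsupp, Finset.card_sdiff_of_subset hQ, ht, hQ4]; omega)
    exact ⟨w₂, h₁.trans h₂, heven⟩

theorem intCast_sq_zmod_four (x : ℤ) : ((x ^ 2 : ℤ) : ZMod 4) = if Odd x then 1 else 0 := by
  split_ifs with hx
  · rw [← ZMod.intCast_mod, Nat.cast_ofNat, Int.sq_mod_four_eq_one_of_odd hx, Int.cast_one]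
  · obtain ⟨r, rfl⟩ := Int.not_odd_iff_even.mp hx
    exact (ZMod.intCast_zmod_eq_zero_iff_dvd _ 4).mpr ⟨r ^ 2, by ring⟩

theorem four_dvd_card_oddSupport {n : ℕ} {w : Fin n → ℤ} {q : ℕ} (hq : 0 < q)
    (h : ∑ j, w j ^ 2 = 4 ^ q) : 4 ∣ (oddSupport w).card := by
  have h4 := congrArg (Int.cast : ℤ → ZMod 4) h
  rw [Int.cast_sum] at h4
  simp only [intCast_sq_zmod_four, Finset.sum_boole] at h4
  rwa [Int.cast_pow, Int.cast_ofNat, show (4 : ZMod 4) = 0 from rfl, zero_pow hq.ne',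
    ZMod.natCast_eq_zero_iff] at h4

theorem sum_sq_eq_four_pow {n : ℕ} {v : Fin n → ℂ} {w : Fin n → ℤ} {q : ℕ}
    (hunit : ∑ j, (starRingEnd ℂ) (v j) * v j = 1) (hw : ∀ j, (2 : ℂ) ^ q * v j = w j) :
    ∑ j, w j ^ 2 = 4 ^ q := by
  have h : ∑ j, (w j : ℂ) ^ 2 = 4 ^ q := by
    calc ∑ j, (w j : ℂ) ^ 2
        = ∑ j, (starRingEnd ℂ) ((2 : ℂ) ^ q * v j) * ((2 : ℂ) ^ q * v j) := by
          simp only [hw, map_intCast, sq]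
      _ = 4 ^ q * ∑ j, (starRingEnd ℂ) (v j) * v j := by
          rw [Finset.mul_sum]
          refine Finset.sum_congr rfl fun j _ => ?_
          rw [map_mul, map_pow, map_ofNat, show (4 : ℂ) = 2 * 2 by norm_num, mul_pow]
          ring
      _ = 4 ^ q := by rw [hunit, mul_one]
  exact_mod_cast h

theorem exists_two_pow_lde2_mul_eq_intCast {n : ℕ} {v : Fin n → ℂ} (hD : ∀ j, IsDyadic (v j)) :
    ∀ j, ∃ u : ℤ, (2 : ℂ) ^ lde2 v * v j = u := by
  choose u q hv using hD
  refine Nat.sInf_mem (s := {q : ℕ | ∀ j, ∃ u : ℤ, (2 : ℂ) ^ q * v j = u})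
    ⟨Finset.univ.sup q, fun j => ⟨u j * 2 ^ (Finset.univ.sup q - q j), ?_⟩⟩
  rw [hv j, ← pow_mul_pow_sub (2 : ℂ) (Finset.le_sup (Finset.mem_univ j))]
  push_cast
  field_simp

theorem lde2_lt_of_two_pow_mul_eq_even {n : ℕ} {x : Fin n → ℂ} {q : ℕ} {w : Fin n → ℤ}
    (hq : 0 < q) (hw : ∀ j, (2 : ℂ) ^ q * x j = w j) (heven : ∀ j, Even (w j)) :
    lde2 x < q := by
  refine lt_of_le_of_lt (Nat.sInf_le fun j => ?_) (Nat.sub_lt hq one_pos)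
  obtain ⟨r, hr⟩ := heven j
  refine ⟨r, mul_left_cancel₀ two_ne_zero ?_⟩
  rw [← mul_assoc, ← pow_succ', Nat.sub_one_add_one_eq_of_pos hq, hw j, hr]
  push_cast
  ring

theorem stmt7_general (n : ℕ) (v : Fin n → ℂ)
    (hunit : ∑ j, (starRingEnd ℂ) (v j) * v j = 1)
    (hD : ∀ j, IsDyadic (v j))
    (hlde : 0 < lde2 v) :
    ∃ L : List (Matrix (Fin n) (Fin n) ℂ),
      (∀ G ∈ L, IsIntGen G) ∧ lde2 (L.prod.mulVec v) < lde2 v := by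
  choose w hw using exists_two_pow_lde2_mul_eq_intCast hD
  obtain ⟨w', ⟨L, hL, hLw⟩, heven⟩ :=
    exists_reachable_even w (four_dvd_card_oddSupport hlde (sum_sq_eq_four_pow hunit hw))
  refine ⟨L, hL, lde2_lt_of_two_pow_mul_eq_even hlde (fun j => ?_) heven⟩
  have hscale : (2 : ℂ) ^ lde2 v • v = fun j => (w j : ℂ) := funext hw
  rw [← congrFun hLw j, ← hscale, mulVec_smul]
  rfl

/-- A unit vector over `ℤ[1/2]` of dimension `n ≥ 4` with positive least
2-denominator exponent can have its exponent strictly reduced by generators. -/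
theorem stmt7 (n : ℕ) (hn : 4 ≤ n) (v : Fin n → ℂ)
    (hunit : ∑ j, (starRingEnd ℂ) (v j) * v j = 1)
    (hD : ∀ j, IsDyadic (v j))
    (hlde : 0 < lde2 v) :
    ∃ L : List (Matrix (Fin n) (Fin n) ℂ),
      (∀ G ∈ L, IsIntGen G) ∧ lde2 (L.prod.mulVec v) < lde2 v :=
  stmt7_general n v hunit hD hlde
end
end
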